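/- arXiv:2101.05663 — 2 statements merged into one kernel-verified Lean document; each statement's English description precedes it below -/
import Mathlib

section
/- Let p be a prime and a ≥ 1 an integer. For any integer x coprime to p, the sum of χ(x) over all Dirichlet characters χ modulo p^a whose conductor is exactly p^a equals: 0 if ν_p(x-1) < a-1; ⌊p^(a-2)⌋ - p^(a-1) if ν_p(x-1) = a-1; and ⌊p^(a-2)⌋ - 2p^(a-1) + p^a if ν_p(x-1) ≥ a. (Here ⌊p^(a-2)⌋ means p^(a-2) if a ≥ 2 and 0 if a = 1, and ν_p denotes the p-adic valuation.) -/
/-!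
A character of level `p ^ a` with smaller conductor is exactly one lifted, by `changeLevel`,
from level `p ^ (a - 1)`; lifting is injective and keeps the values at units. So the sum over
primitive characters is the difference of the sums over all characters at levels `p ^ a` and
`p ^ (a - 1)`, and orthogonality evaluates these as `φ(p ^ a)` resp. `φ(p ^ (a - 1))` when
`x ≡ 1` modulo the level, and `0` otherwise.
-/

open Finset DirichletCharacter

namespace DirichletCharacter

variable {R : Type*} [CommRing R]

theorem conductor_ne_prime_pow_iff {p a : ℕ} (hp : p.Prime) (ha : 1 ≤ a)
    (χ : DirichletCharacter R (p ^ a)) :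
    χ.conductor ≠ p ^ a ↔ χ.conductor ∣ p ^ (a - 1) := by
  obtain ⟨i, hi, hχ⟩ := (Nat.dvd_prime_pow hp).mp χ.conductor_dvd_level
  rw [hχ, Nat.pow_dvd_pow_iff_le_right hp.one_lt, ne_eq, Nat.pow_right_inj hp.two_le]
  omega

variable [IsDomain R]

theorem sum_apply_intCast {n : ℕ} [NeZero n] [HasEnoughRootsOfUnity R (Monoid.exponent (ZMod n)ˣ)]
    (x : ℤ) :
    ∑ χ : DirichletCharacter R n, χ x = if (n : ℤ) ∣ x - 1 then (n.totient : R) else 0 := by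
  have hx : (x : ZMod n) = 1 ↔ (n : ℤ) ∣ x - 1 := by
    rw [eq_comm, ← Int.cast_one, ZMod.intCast_eq_intCast_iff_dvd_sub]
  simp only [sum_characters_eq, hx]

theorem filter_conductor_ne_prime_pow_eq_image {p a : ℕ} (hp : p.Prime) (ha : 1 ≤ a)
    [DecidableEq (DirichletCharacter R (p ^ a))] :
    univ.filter (fun χ : DirichletCharacter R (p ^ a) => ¬χ.conductor = p ^ a) =
      univ.image (changeLevel (R := R) (pow_dvd_pow p (a.sub_le 1))) := by
  have : NeZero (p ^ a) := ⟨pow_ne_zero _ hp.ne_zero⟩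
  ext χ
  rw [mem_filter, mem_image, ← ne_eq, conductor_ne_prime_pow_iff hp ha,
    ← mem_conductorSet_iff_conductor_dvd _ (pow_dvd_pow p (a.sub_le 1))]
  simp only [mem_univ, true_and, mem_conductorSet_iff, FactorsThrough, eq_comm]
  exact ⟨fun ⟨_, χ₀, h⟩ => ⟨χ₀, h⟩, fun ⟨χ₀, h⟩ => ⟨_, χ₀, h⟩⟩

theorem sum_filter_conductor_eq_prime_pow_apply {p a : ℕ} (hp : p.Prime) (ha : 1 ≤ a) {x : ℤ}
    (hx : IsCoprime x p) :
    ∑ χ ∈ univ.filter (fun χ : DirichletCharacter R (p ^ a) => χ.conductor = p ^ a), χ x =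
      ∑ χ : DirichletCharacter R (p ^ a), χ x - ∑ χ₀ : DirichletCharacter R (p ^ (a - 1)), χ₀ x := by
  have : NeZero (p ^ a) := ⟨pow_ne_zero _ hp.ne_zero⟩
  have hdvd := pow_dvd_pow p (a.sub_le 1)
  have hxa : IsCoprime x (p ^ a : ℕ) := by exact_mod_cast hx.pow_right
  classical
  rw [← sum_filter_add_sum_filter_not univ (fun χ => χ.conductor = p ^ a)
    (fun χ : DirichletCharacter R (p ^ a) => χ x),
    add_sub_assoc, left_eq_add, sub_eq_zero, filter_conductor_ne_prime_pow_eq_image hp ha,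
    sum_image fun χ₁ _ χ₂ _ h => changeLevel_injective hdvd h]
  exact sum_congr rfl fun χ₀ _ => changeLevel_eq_cast_of_dvd' χ₀ hdvd hxa

end DirichletCharacter

theorem Nat.cast_totient_prime_pow {R : Type*} [Ring R] {p a : ℕ} (hp : p.Prime) (ha : 1 ≤ a) :
    ((p ^ a).totient : R) = p ^ a - p ^ (a - 1) := by
  obtain ⟨b, rfl⟩ := Nat.exists_eq_add_of_le' ha
  rw [Nat.totient_prime_pow_succ hp, Nat.cast_mul, Nat.cast_sub hp.one_le, Nat.cast_pow,
    Nat.cast_one, Nat.add_sub_cancel, mul_sub, mul_one, pow_succ]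

theorem Nat.cast_totient_prime_pow_pred {R : Type*} [Ring R] {p a : ℕ} (hp : p.Prime)
    (ha : 1 ≤ a) :
    ((p ^ (a - 1)).totient : R) = p ^ (a - 1) - if 2 ≤ a then (p : R) ^ (a - 2) else 0 := by
  split_ifs with h
  · rw [Nat.cast_totient_prime_pow hp (by omega), Nat.sub_sub]
  · simp [show a = 1 by omega]

/-- Let `p` be a prime and `a ≥ 1`. For any integer `x` coprime to `p`,
the sum of `χ(x)` over all Dirichlet characters `χ` modulo `p^a` with conductor exactly
`p^a` equals `0` if `ν_p(x-1) < a-1`, `⌊p^(a-2)⌋ - p^(a-1)` if `ν_p(x-1) = a-1`, and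
`⌊p^(a-2)⌋ - 2p^(a-1) + p^a` if `ν_p(x-1) ≥ a`, where `⌊p^(a-2)⌋` means `p^(a-2)` if
`a ≥ 2` and `0` if `a = 1`. -/
theorem sum_primitive_chars_eval (p : ℕ) (hp : p.Prime) (a : ℕ) (ha : 1 ≤ a)
    (x : ℤ) (hx : IsCoprime x (p : ℤ)) :
    (∑ χ ∈ Finset.univ.filter
        (fun χ : DirichletCharacter ℂ (p ^ a) => χ.conductor = p ^ a), χ (x : ZMod (p ^ a)))
      =
    if ¬ (p : ℤ) ^ (a - 1) ∣ (x - 1) then 0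
    else if ¬ (p : ℤ) ^ a ∣ (x - 1) then
      (if 2 ≤ a then (p : ℂ) ^ (a - 2) else 0) - (p : ℂ) ^ (a - 1)
    else
      (if 2 ≤ a then (p : ℂ) ^ (a - 2) else 0) - 2 * (p : ℂ) ^ (a - 1) + (p : ℂ) ^ a := by
  have : NeZero (p ^ a) := ⟨pow_ne_zero _ hp.ne_zero⟩
  have : NeZero (p ^ (a - 1)) := ⟨pow_ne_zero _ hp.ne_zero⟩
  rw [sum_filter_conductor_eq_prime_pow_apply hp ha hx, sum_apply_intCast, sum_apply_intCast,
    Nat.cast_totient_prime_pow hp ha, Nat.cast_totient_prime_pow_pred hp ha]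
  push_cast
  have hpred : (p : ℤ) ^ a ∣ x - 1 → (p : ℤ) ^ (a - 1) ∣ x - 1 :=
    (pow_dvd_pow _ (a.sub_le 1)).trans
  generalize (if 2 ≤ a then (p : ℂ) ^ (a - 2) else 0) = q
  by_cases hₐ : (p : ℤ) ^ a ∣ x - 1
  · simp only [hₐ, hpred hₐ, if_true, not_true_eq_false, if_false]
    ring
  · simp only [hₐ, if_false, not_false_eq_true, if_true]
    split_ifs <;> ring
end

section
/- Let p be an odd prime and let χ₁, χ₂ be twist-minimal Dirichlet characters of levels p^e and p^f respectively with e < f and cond(χ₂) = p^f (χ₂ primitive). Then there is no Dirichlet character ψ such that max(e, ν_p(cond(ψ)) + ν_p(cond(χ₁ψ))) = f and cond(χ₁ψ²) = p^f. (That is, no twist of a twist-minimal form of level p^e with character χ₁ yields a newform of level p^f with primitive character χ₂.) -/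
/-- A Dirichlet character `χ` of level `p^e`, `p` an odd prime, is twist-minimal iff it is
primitive, or trivial, or of order `2^{ν₂(p-1)}`. -/
def IsTwistMinimalOdd {p e : ℕ} (χ : DirichletCharacter ℂ (p ^ e)) : Prop :=
  χ.conductor = p ^ e ∨ χ = 1 ∨ orderOf χ = 2 ^ ((p - 1).factorization 2)

/-!
Write `a`, `b` for the `p`-adic valuations of the conductors of `ψ` and `χ₁ψ`. On valuations of
conductors, multiplication of characters is ultrametric. Hence the first condition forces
`a + b = f`, the second forces `f ≤ max a b`, so one of `a`, `b` vanishes and the other is `f`.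
But `χ₁ψ = χ₁ · ψ` and `ψ = χ₁⁻¹ · χ₁ψ`, and `χ₁` has valuation at most `e < f`, so neither
`b = f, a = 0` nor `a = f, b = 0` is possible.
-/

namespace DirichletCharacter

variable {R : Type*} [CommMonoidWithZero R] {n : ℕ}

lemma factorization_conductor_le_factorization_level [NeZero n] (χ : DirichletCharacter R n)
    (p : ℕ) : χ.conductor.factorization p ≤ n.factorization p :=
  (Nat.factorization_le_iff_dvd χ.conductor_ne_zero (NeZero.ne n)).mpr χ.conductor_dvd_level p

lemma factorization_conductor_mul_le [NeZero n] (χ ψ : DirichletCharacter R n) (p : ℕ) :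
    (χ * ψ).conductor.factorization p ≤
      max (χ.conductor.factorization p) (ψ.conductor.factorization p) := by
  have hχ := χ.conductor_ne_zero
  have hψ := ψ.conductor_ne_zero
  have hdvd := (Nat.factorization_le_iff_dvd (χ * ψ).conductor_ne_zero
    (Nat.lcm_ne_zero hχ hψ)).mpr (conductor_mul_dvd_lcm_conductor χ ψ)
  rw [Nat.factorization_lcm hχ hψ] at hdvd
  exact hdvd p

lemma factorization_conductor_le_max_mul [NeZero n] (χ ψ : DirichletCharacter R n) (p : ℕ) :
    ψ.conductor.factorization p ≤
      max (χ.conductor.factorization p) ((χ * ψ).conductor.factorization p) := by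
  simpa only [inv_mul_cancel_left, conductor_inv] using
    factorization_conductor_mul_le χ⁻¹ (χ * ψ) p

end DirichletCharacter

open DirichletCharacter

theorem no_twist_to_primitive (p e f : ℕ) (hp : p.Prime) (hef : e < f)
    (χ₁ : DirichletCharacter ℂ (p ^ e)) :
    ∀ (g : ℕ) (ψ : DirichletCharacter ℂ (p ^ g)),
      ¬ (max e (ψ.conductor.factorization p +
            ((DirichletCharacter.changeLevel
                (pow_dvd_pow p (by omega : e ≤ e + g + f)) χ₁ *
              DirichletCharacter.changeLevel
                (pow_dvd_pow p (by omega : g ≤ e + g + f)) ψ).conductor.factorization p))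
          = f ∧
        (DirichletCharacter.changeLevel
            (pow_dvd_pow p (by omega : e ≤ e + g + f)) χ₁ *
          (DirichletCharacter.changeLevel
            (pow_dvd_pow p (by omega : g ≤ e + g + f)) ψ) ^ 2).conductor = p ^ f) := by
  intro g ψ ⟨hmax, hcond⟩
  have : NeZero (p ^ (e + g + f)) := ⟨pow_ne_zero _ hp.ne_zero⟩
  set X := changeLevel (pow_dvd_pow p (by omega : e ≤ e + g + f)) χ₁
  set Y := changeLevel (pow_dvd_pow p (by omega : g ≤ e + g + f)) ψ
  have hX : X.conductor.factorization p ≤ e := by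
    have : NeZero (p ^ e) := ⟨pow_ne_zero _ hp.ne_zero⟩
    simpa [X, conductor_changeLevel, hp.factorization_self] using
      factorization_conductor_le_factorization_level χ₁ p
  have hY : Y.conductor.factorization p = ψ.conductor.factorization p := by
    rw [conductor_changeLevel]
  have hf : (X * Y * Y).conductor.factorization p = f := by
    rw [mul_assoc, ← sq, hcond, hp.factorization_pow, Finsupp.single_eq_same]
  have h₁ := factorization_conductor_mul_le (X * Y) Y p
  have h₂ := factorization_conductor_mul_le X Y p
  have h₃ := factorization_conductor_le_max_mul X Y p
  omega
end
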